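/- Work on ℝ^{K+4} with coordinates (x, u₀, u₁, v₀, v₁, …, v_K), K ≥ 6, and let D denote the total derivative operator on smooth functions, Df = ∂f/∂x + u₁∂f/∂u₀ + u₀v₁∂f/∂u₁ + Σ_{r=0}^{K−1} v_{r+1}∂f/∂v_r. Let p be a smooth function depending only on the coordinates (x, u₀, u₁, v₀, …, v_{K−4}). On the open set where Δ := 2u₀²v₁ − 2u₁² ≠ 0 and u₀ ≠ 0, define z⁰ := (−2u₁p + u₀Dp)/Δ and z₀ := (1/u₀)Dz⁰ − (2v₁/Δ)p + (u₁/(u₀Δ))Dp. Then on this open set D(Dz⁰) = v₁z⁰ + u₀Dz₀. -/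

import Mathlib

noncomputable section

open scoped BigOperators

/-- Index set of the coordinates `x, u₀, u₁, v₀, …, v_K` of `ℝ^{K+4}`. -/
abbrev Coord (K : ℕ) := Unit ⊕ Unit ⊕ Unit ⊕ Fin (K + 1)

/-- A point of `ℝ^{K+4}`. -/
abbrev Pt (K : ℕ) := Coord K → ℝ

/-- The coordinate `x`. -/
def ix (K : ℕ) : Coord K := Sum.inl ()
/-- The coordinate `u₀`. -/
def iu0 (K : ℕ) : Coord K := Sum.inr (Sum.inl ())
/-- The coordinate `u₁`. -/
def iu1 (K : ℕ) : Coord K := Sum.inr (Sum.inr (Sum.inl ()))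
/-- The coordinate `v_r`. -/
def iv (K r : ℕ) (h : r < K + 1) : Coord K := Sum.inr (Sum.inr (Sum.inr ⟨r, h⟩))

/-- The partial derivative `∂f/∂(coordinate i)` at a point. -/
def pd {K : ℕ} (i : Coord K) (f : Pt K → ℝ) (p : Pt K) : ℝ :=
  fderiv ℝ f p (Pi.single i 1)

/-- The components of the total derivative vector field
`D = ∂/∂x + u₁∂/∂u₀ + F∂/∂u₁ + Σ_{r=0}^{K-1} v_{r+1}∂/∂v_r`. -/
def Dvf {K : ℕ} (F : Pt K → ℝ) : Pt K → Coord K → ℝ := fun p b =>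
  match b with
  | Sum.inl _ => 1
  | Sum.inr (Sum.inl _) => p (iu1 K)
  | Sum.inr (Sum.inr (Sum.inl _)) => F p
  | Sum.inr (Sum.inr (Sum.inr r)) =>
      if h : (r : ℕ) + 1 < K + 1 then p (iv K ((r : ℕ) + 1) h) else 0

/-- The Lie derivative of a 1-form `ω` (given by its components `ω_c`) along a
vector field `X` (given by its components `X^b`):
`(L_X ω)_c = Σ_b X^b ∂ω_c/∂b + Σ_b ω_b ∂X^b/∂c`. -/
def lieD {K : ℕ} (X ω : Pt K → Coord K → ℝ) : Pt K → Coord K → ℝ := fun p c =>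
  (∑ b : Coord K, X p b * pd b (fun q => ω q c) p)
    + ∑ b : Coord K, ω p b * pd c (fun q => X q b) p

/-- The contact form `α₀ = du₀ - u₁ dx` (components). -/
def α0 (K : ℕ) : Pt K → Coord K → ℝ := fun p c =>
  if c = iu0 K then 1 else if c = ix K then -p (iu1 K) else 0

/-- The contact form `α₁ = du₁ - F dx` (components). -/
def α1 {K : ℕ} (F : Pt K → ℝ) : Pt K → Coord K → ℝ := fun p c =>
  if c = iu1 K then 1 else if c = ix K then -F p else 0

/-- The contact form `β_r = dv_r - v_{r+1} dx` (components), for `r + 1 ≤ K`. -/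
def βf (K r : ℕ) (h : r + 1 < K + 1) : Pt K → Coord K → ℝ := fun p c =>
  if c = iv K r (by omega) then 1 else if c = ix K then -p (iv K (r + 1) h) else 0

/-- The total derivative acting on functions: `Df = Σ_b D^b ∂f/∂b`. -/
def Dop {K : ℕ} (F f : Pt K → ℝ) : Pt K → ℝ := fun p =>
  ∑ b : Coord K, Dvf F p b * pd b f p

/-- The right-hand side `F = u₀v₁` of the equation `u'' = u·v'`. -/
def Fuv (K : ℕ) (hK : 6 ≤ K) : Pt K → ℝ := fun p =>
  p (iu0 K) * p (iv K 1 (by omega))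

/-- `Δ := 2u₀²v₁ - 2u₁²`. -/
def Δf (K : ℕ) (hK : 6 ≤ K) : Pt K → ℝ := fun p =>
  2 * (p (iu0 K)) ^ 2 * p (iv K 1 (by omega)) - 2 * (p (iu1 K)) ^ 2

/-- `z⁰ := (-2u₁p + u₀Dp)/Δ`, formula (3.8). -/
def z0f (K : ℕ) (hK : 6 ≤ K) (P : Pt K → ℝ) : Pt K → ℝ := fun q =>
  (-(2 * q (iu1 K) * P q) + q (iu0 K) * Dop (Fuv K hK) P q) / Δf K hK q

/-- `z₀ := (1/u₀)Dz⁰ - (2v₁/Δ)p + (u₁/(u₀Δ))Dp`, formula (3.8). -/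
def zlof (K : ℕ) (hK : 6 ≤ K) (P : Pt K → ℝ) : Pt K → ℝ := fun q =>
  (1 / q (iu0 K)) * Dop (Fuv K hK) (z0f K hK P) q
    - (2 * q (iv K 1 (by omega)) / Δf K hK q) * P q
    + (q (iu1 K) / (q (iu0 K) * Δf K hK q)) * Dop (Fuv K hK) P q

section DopCalculus

variable {K : ℕ} {F f g : Pt K → ℝ} {p : Pt K}

lemma Dop_eq (F f : Pt K → ℝ) (p : Pt K) :
    Dop F f p = fderiv ℝ f p (Dvf F p) := by
  have h : (Dvf F p) = ∑ b : Coord K, (Dvf F p b) • (Pi.single b 1 : Pt K) := by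
    funext i
    rw [Finset.sum_apply]
    simp [Pi.single_apply]
  conv_rhs => rw [h]
  rw [map_sum]
  simp [Dop, pd, smul_eq_mul]

lemma Dop_congr (h : f =ᶠ[nhds p] g) : Dop F f p = Dop F g p := by
  rw [Dop_eq, Dop_eq, h.fderiv_eq]

lemma Dop_add (hf : DifferentiableAt ℝ f p) (hg : DifferentiableAt ℝ g p) :
    Dop F (fun q => f q + g q) p = Dop F f p + Dop F g p := by
  simp [Dop_eq, fderiv_fun_add hf hg]

lemma Dop_sub (hf : DifferentiableAt ℝ f p) (hg : DifferentiableAt ℝ g p) :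
    Dop F (fun q => f q - g q) p = Dop F f p - Dop F g p := by
  simp [Dop_eq, fderiv_fun_sub hf hg]

lemma Dop_const (c : ℝ) : Dop F (fun _ => c) p = 0 := by
  simp [Dop_eq]

lemma Dop_mul (hf : DifferentiableAt ℝ f p) (hg : DifferentiableAt ℝ g p) :
    Dop F (fun q => f q * g q) p = Dop F f p * g p + f p * Dop F g p := by
  simp [Dop_eq, fderiv_fun_mul hf hg, smul_eq_mul]
  ring

lemma Dop_const_mul (c : ℝ) (hf : DifferentiableAt ℝ f p) :
    Dop F (fun q => c * f q) p = c * Dop F f p := by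
  rw [Dop_mul (differentiableAt_const c) hf, Dop_const]; ring

lemma Dop_neg (hf : DifferentiableAt ℝ f p) :
    Dop F (fun q => -f q) p = -Dop F f p := by
  have : (fun q => -f q) = fun q => (-1 : ℝ) * f q := by funext q; ring
  rw [this, Dop_const_mul _ hf]; ring

lemma Dop_inv (hg : DifferentiableAt ℝ g p) (h0 : g p ≠ 0) :
    Dop F (fun q => (g q)⁻¹) p = -Dop F g p / (g p) ^ 2 := by
  have hc : (fun q => (g q)⁻¹) = (fun x : ℝ => x⁻¹) ∘ g := rfl
  rw [Dop_eq, hc, fderiv_comp p (differentiableAt_inv h0) hg, fderiv_inv]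
  simp [Dop_eq, smul_eq_mul]
  ring

lemma Dop_div (hf : DifferentiableAt ℝ f p) (hg : DifferentiableAt ℝ g p) (h0 : g p ≠ 0) :
    Dop F (fun q => f q / g q) p
      = (Dop F f p * g p - f p * Dop F g p) / (g p) ^ 2 := by
  have hc : (fun q => f q / g q) = fun q => f q * (g q)⁻¹ := by
    funext q; rw [div_eq_mul_inv]
  rw [hc, Dop_mul (g := fun q => (g q)⁻¹) hf (hg.inv h0), Dop_inv hg h0]
  field_simp
  ring

lemma differentiableAt_coord (i : Coord K) :
    DifferentiableAt ℝ (fun q : Pt K => q i) p :=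
  (ContinuousLinearMap.proj (R := ℝ) (φ := fun _ : Coord K => ℝ) i).differentiableAt

lemma contDiff_coord (i : Coord K) :
    ContDiff ℝ (⊤ : ℕ∞) (fun q : Pt K => q i) :=
  (ContinuousLinearMap.proj (R := ℝ) (φ := fun _ : Coord K => ℝ) i).contDiff

lemma Dop_coord (i : Coord K) : Dop F (fun q => q i) p = Dvf F p i := by
  rw [Dop_eq]
  rw [show (fun q : Pt K => q i)
      = ⇑(ContinuousLinearMap.proj (R := ℝ) (φ := fun _ : Coord K => ℝ) i) from rfl]
  rw [ContinuousLinearMap.fderiv]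
  rfl

lemma contDiff_pd (i : Coord K) (hf : ContDiff ℝ (⊤ : ℕ∞) f) :
    ContDiff ℝ (⊤ : ℕ∞) (fun p => pd i f p) :=
  (hf.fderiv_right (by simp)).clm_apply contDiff_const

lemma Dvf_iv {r : ℕ} (hr : r < K + 1) (h : r + 1 < K + 1) :
    Dvf F p (iv K r hr) = p (iv K (r + 1) h) := by
  show (if h' : r + 1 < K + 1 then p (iv K (r + 1) h') else 0) = _
  rw [dif_pos h]

lemma Dvf_iu0 : Dvf F p (iu0 K) = p (iu1 K) := rfl
lemma Dvf_iu1 : Dvf F p (iu1 K) = F p := rfl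

lemma contDiff_Fuv (hK : 6 ≤ K) : ContDiff ℝ (⊤ : ℕ∞) (Fuv K hK) :=
  (contDiff_coord _).mul (contDiff_coord _)

lemma contDiff_Dop (hK : 6 ≤ K) (hf : ContDiff ℝ (⊤ : ℕ∞) f) :
    ContDiff ℝ (⊤ : ℕ∞) (Dop (Fuv K hK) f) := by
  unfold Dop
  apply ContDiff.sum
  intro b _
  apply ContDiff.mul _ (contDiff_pd b hf)
  rcases b with _ | b
  · exact contDiff_const
  rcases b with _ | b
  · exact contDiff_coord _
  rcases b with _ | r
  · exact contDiff_Fuv hK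
  · by_cases h : (r : ℕ) + 1 < K + 1
    · simp only [Dvf, dif_pos h]
      exact contDiff_coord _
    · simp only [Dvf, dif_neg h]
      exact contDiff_const

lemma diffAt_div {f g : Pt K → ℝ} (hf : DifferentiableAt ℝ f p)
    (hg : DifferentiableAt ℝ g p) (h0 : g p ≠ 0) :
    DifferentiableAt ℝ (fun q => f q / g q) p := by
  simp only [div_eq_mul_inv]
  exact hf.mul (hg.inv h0)

end DopCalculus

/-- Formulae (3.8) solve the variational equation (3.7):
`D²z⁰ = v₁z⁰ + u₀Dz₀` on the open set where `Δ ≠ 0` and `u₀ ≠ 0`. -/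
theorem variation_solution (K : ℕ) (hK : 6 ≤ K) (P : Pt K → ℝ)
    (hP : ContDiff ℝ (⊤ : ℕ∞) P)
    (hdep : ∀ p q : Pt K, p (ix K) = q (ix K) → p (iu0 K) = q (iu0 K) →
      p (iu1 K) = q (iu1 K) →
      (∀ (r : ℕ) (h : r < K + 1), r ≤ K - 4 → p (iv K r h) = q (iv K r h)) →
      P p = P q) :
    ∀ p : Pt K, Δf K hK p ≠ 0 → p (iu0 K) ≠ 0 →
      Dop (Fuv K hK) (Dop (Fuv K hK) (z0f K hK P)) p =
        p (iv K 1 (by omega)) * z0f K hK P p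
        + p (iu0 K) * Dop (Fuv K hK) (zlof K hK P) p := by
  intro p hΔ hu0
  have h1 : (1 : ℕ) < K + 1 := by omega
  have h2 : (2 : ℕ) < K + 1 := by omega
  show Dop (Fuv K hK) (Dop (Fuv K hK) (z0f K hK P)) p =
      p (iv K 1 h1) * z0f K hK P p
      + p (iu0 K) * Dop (Fuv K hK) (zlof K hK P) p
  set F := Fuv K hK with hFdef
  set Q : Pt K → ℝ := Dop F P with hQdef
  set N : Pt K → ℝ := fun q => -(2 * q (iu1 K) * P q) + q (iu0 K) * Q q with hNdef
  -- smoothness facts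
  have hQs : ContDiff ℝ (⊤ : ℕ∞) Q := contDiff_Dop hK hP
  have hNs : ContDiff ℝ (⊤ : ℕ∞) N := by
    rw [hNdef]
    exact ((contDiff_const.mul (contDiff_coord _)).mul hP).neg.add
      ((contDiff_coord _).mul hQs)
  have hΔs : ContDiff ℝ (⊤ : ℕ∞) (Δf K hK) := by
    unfold Δf
    exact ((contDiff_const.mul ((contDiff_coord _).pow 2)).mul (contDiff_coord _)).sub
      (contDiff_const.mul ((contDiff_coord _).pow 2))
  have hDNs : ContDiff ℝ (⊤ : ℕ∞) (Dop F N) := contDiff_Dop hK hNs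
  have hDΔs : ContDiff ℝ (⊤ : ℕ∞) (Dop F (Δf K hK)) := contDiff_Dop hK hΔs
  have dP : ∀ q, DifferentiableAt ℝ P q := fun q => hP.differentiable (by simp) q
  have dQ : ∀ q, DifferentiableAt ℝ Q q := fun q => hQs.differentiable (by simp) q
  have dN : ∀ q, DifferentiableAt ℝ N q := fun q => hNs.differentiable (by simp) q
  have dΔ : ∀ q, DifferentiableAt ℝ (Δf K hK) q := fun q => hΔs.differentiable (by simp) q
  have dDN : ∀ q, DifferentiableAt ℝ (Dop F N) q := fun q => hDNs.differentiable (by simp) q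
  have dDΔ : ∀ q, DifferentiableAt ℝ (Dop F (Δf K hK)) q :=
    fun q => hDΔs.differentiable (by simp) q
  have hQp : ∀ q, Dop F P q = Q q := fun _ => rfl
  have hz0 : z0f K hK P = fun q => N q / Δf K hK q := rfl
  -- derivative of z⁰ near p
  have hDz0 : ∀ q, Δf K hK q ≠ 0 → Dop F (z0f K hK P) q =
      (Dop F N q * Δf K hK q - N q * Dop F (Δf K hK) q) / (Δf K hK q) ^ 2 := by
    intro q hq
    rw [hz0]
    exact Dop_div (dN q) (dΔ q) hq
  have hmem : {q : Pt K | Δf K hK q ≠ 0} ∈ nhds p :=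
    (isOpen_ne.preimage hΔs.continuous).mem_nhds hΔ
  have heq : (Dop F (z0f K hK P)) =ᶠ[nhds p] (fun q =>
      (Dop F N q * Δf K hK q - N q * Dop F (Δf K hK) q) / (Δf K hK q) ^ 2) := by
    filter_upwards [hmem] with q hq using hDz0 q hq
  have hGd : DifferentiableAt ℝ (Dop F (z0f K hK P)) p := by
    rw [heq.differentiableAt_iff]
    exact diffAt_div (((dDN p).mul (dΔ p)).sub ((dN p).mul (dDΔ p))) ((dΔ p).pow 2)
      (pow_ne_zero 2 hΔ)
  have hGp := hDz0 p hΔ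
  -- derivatives of coordinates
  have hDu0 : Dop F (fun q => q (iu0 K)) p = p (iu1 K) := Dop_coord _
  have hDu1 : Dop F (fun q => q (iu1 K)) p = F p := Dop_coord _
  have hDv1 : Dop F (fun q => q (iv K 1 h1)) p = p (iv K 2 h2) := by
    rw [Dop_coord]; exact Dvf_iv h1 h2
  -- derivative of Δ at p
  have hΔ2 : Δf K hK = fun q =>
      2 * q (iu0 K) * q (iu0 K) * q (iv K 1 h1) - 2 * q (iu1 K) * q (iu1 K) := by
    funext q
    show 2 * (q (iu0 K)) ^ 2 * q (iv K 1 h1) - 2 * (q (iu1 K)) ^ 2 = _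
    ring
  have d1 : DifferentiableAt ℝ (fun q : Pt K => 2 * q (iu0 K)) p :=
    (differentiableAt_const _).mul (differentiableAt_coord _)
  have d2 : DifferentiableAt ℝ (fun q : Pt K => 2 * q (iu0 K) * q (iu0 K)) p :=
    d1.mul (differentiableAt_coord _)
  have d1' : DifferentiableAt ℝ (fun q : Pt K => 2 * q (iu1 K)) p :=
    (differentiableAt_const _).mul (differentiableAt_coord _)
  have e1 : Dop F (fun q : Pt K => 2 * q (iu0 K)) p = 2 * p (iu1 K) := by
    rw [Dop_const_mul _ (differentiableAt_coord _), hDu0]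
  have e1' : Dop F (fun q : Pt K => 2 * q (iu1 K)) p = 2 * F p := by
    rw [Dop_const_mul _ (differentiableAt_coord _), hDu1]
  have e2 : Dop F (fun q : Pt K => 2 * q (iu0 K) * q (iu0 K)) p
      = 2 * p (iu1 K) * p (iu0 K) + 2 * p (iu0 K) * p (iu1 K) := by
    rw [Dop_mul d1 (differentiableAt_coord _), e1, hDu0]
  have e3 : Dop F (fun q : Pt K => 2 * q (iu0 K) * q (iu0 K) * q (iv K 1 h1)) p
      = (2 * p (iu1 K) * p (iu0 K) + 2 * p (iu0 K) * p (iu1 K)) * p (iv K 1 h1)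
        + 2 * p (iu0 K) * p (iu0 K) * p (iv K 2 h2) := by
    rw [Dop_mul d2 (differentiableAt_coord _), e2, hDv1]
  have e4 : Dop F (fun q : Pt K => 2 * q (iu1 K) * q (iu1 K)) p
      = 2 * F p * p (iu1 K) + 2 * p (iu1 K) * F p := by
    rw [Dop_mul d1' (differentiableAt_coord _), e1', hDu1]
  have hDΔp : Dop F (Δf K hK) p
      = ((2 * p (iu1 K) * p (iu0 K) + 2 * p (iu0 K) * p (iu1 K)) * p (iv K 1 h1)
          + 2 * p (iu0 K) * p (iu0 K) * p (iv K 2 h2))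
        - (2 * F p * p (iu1 K) + 2 * p (iu1 K) * F p) := by
    rw [hΔ2, Dop_sub (f := fun q => 2 * q (iu0 K) * q (iu0 K) * q (iv K 1 h1))
      (g := fun q => 2 * q (iu1 K) * q (iu1 K)) (d2.mul (differentiableAt_coord _))
      (d1'.mul (differentiableAt_coord _)), e3, e4]
  -- derivative of N at p
  have hN2 : N = fun q => (-2) * q (iu1 K) * P q + q (iu0 K) * Q q := by
    funext q
    simp only [hNdef]
    ring
  have dm0 : DifferentiableAt ℝ (fun q : Pt K => (-2) * q (iu1 K)) p :=
    (differentiableAt_const _).mul (differentiableAt_coord _)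
  have dm1 : DifferentiableAt ℝ (fun q : Pt K => (-2) * q (iu1 K) * P q) p :=
    dm0.mul (dP p)
  have dm2 : DifferentiableAt ℝ (fun q : Pt K => q (iu0 K) * Q q) p :=
    (differentiableAt_coord _).mul (dQ p)
  have em0 : Dop F (fun q : Pt K => (-2) * q (iu1 K)) p = (-2) * F p := by
    rw [Dop_const_mul _ (differentiableAt_coord _), hDu1]
  have em1 : Dop F (fun q : Pt K => (-2) * q (iu1 K) * P q) p
      = (-2) * F p * P p + (-2) * p (iu1 K) * Q p := by
    rw [Dop_mul dm0 (dP p), em0, hQp]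
  have em2 : Dop F (fun q : Pt K => q (iu0 K) * Q q) p
      = p (iu1 K) * Q p + p (iu0 K) * Dop F Q p := by
    rw [Dop_mul (differentiableAt_coord _) (dQ p), hDu0]
  have hDNp : Dop F N p
      = ((-2) * F p * P p + (-2) * p (iu1 K) * Q p)
        + (p (iu1 K) * Q p + p (iu0 K) * Dop F Q p) := by
    rw [hN2, Dop_add dm1 dm2, em1, em2]
  -- derivative of z₀ at p
  have hzlo : zlof K hK P = fun q =>
      (1 / q (iu0 K)) * Dop F (z0f K hK P) q
      - (2 * q (iv K 1 h1) / Δf K hK q) * P q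
      + (q (iu1 K) / (q (iu0 K) * Δf K hK q)) * Q q := rfl
  have dt1a : DifferentiableAt ℝ (fun q : Pt K => 1 / q (iu0 K)) p :=
    diffAt_div (differentiableAt_const _) (differentiableAt_coord _) hu0
  have dT1 : DifferentiableAt ℝ
      (fun q : Pt K => (1 / q (iu0 K)) * Dop F (z0f K hK P) q) p := dt1a.mul hGd
  have dt2n : DifferentiableAt ℝ (fun q : Pt K => 2 * q (iv K 1 h1)) p :=
    (differentiableAt_const _).mul (differentiableAt_coord _)
  have dt2a : DifferentiableAt ℝ (fun q : Pt K => 2 * q (iv K 1 h1) / Δf K hK q) p :=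
    diffAt_div dt2n (dΔ p) hΔ
  have dT2 : DifferentiableAt ℝ
      (fun q : Pt K => (2 * q (iv K 1 h1) / Δf K hK q) * P q) p := dt2a.mul (dP p)
  have dt3d : DifferentiableAt ℝ (fun q : Pt K => q (iu0 K) * Δf K hK q) p :=
    (differentiableAt_coord _).mul (dΔ p)
  have ht3d0 : p (iu0 K) * Δf K hK p ≠ 0 := mul_ne_zero hu0 hΔ
  have dt3a : DifferentiableAt ℝ
      (fun q : Pt K => q (iu1 K) / (q (iu0 K) * Δf K hK q)) p :=
    diffAt_div (differentiableAt_coord _) dt3d ht3d0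
  have dT3 : DifferentiableAt ℝ
      (fun q : Pt K => (q (iu1 K) / (q (iu0 K) * Δf K hK q)) * Q q) p :=
    dt3a.mul (dQ p)
  have g1 : Dop F (fun q : Pt K => 1 / q (iu0 K)) p
      = (0 * p (iu0 K) - 1 * p (iu1 K)) / (p (iu0 K)) ^ 2 := by
    rw [Dop_div (differentiableAt_const _) (differentiableAt_coord _) hu0,
      Dop_const, hDu0]
  have g2 : Dop F (fun q : Pt K => 2 * q (iv K 1 h1)) p = 2 * p (iv K 2 h2) := by
    rw [Dop_const_mul _ (differentiableAt_coord _), hDv1]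
  have g3 : Dop F (fun q : Pt K => 2 * q (iv K 1 h1) / Δf K hK q) p
      = (2 * p (iv K 2 h2) * Δf K hK p
          - 2 * p (iv K 1 h1) * Dop F (Δf K hK) p) / (Δf K hK p) ^ 2 := by
    rw [Dop_div dt2n (dΔ p) hΔ, g2]
  have g4 : Dop F (fun q : Pt K => q (iu0 K) * Δf K hK q) p
      = p (iu1 K) * Δf K hK p + p (iu0 K) * Dop F (Δf K hK) p := by
    rw [Dop_mul (differentiableAt_coord _) (dΔ p), hDu0]
  have g5 : Dop F (fun q : Pt K => q (iu1 K) / (q (iu0 K) * Δf K hK q)) p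
      = (F p * (p (iu0 K) * Δf K hK p)
          - p (iu1 K) * (p (iu1 K) * Δf K hK p + p (iu0 K) * Dop F (Δf K hK) p))
        / (p (iu0 K) * Δf K hK p) ^ 2 := by
    rw [Dop_div (differentiableAt_coord _) dt3d ht3d0, hDu1, g4]
  have t1 : Dop F (fun q : Pt K => (1 / q (iu0 K)) * Dop F (z0f K hK P) q) p
      = ((0 * p (iu0 K) - 1 * p (iu1 K)) / (p (iu0 K)) ^ 2) * Dop F (z0f K hK P) p
        + (1 / p (iu0 K)) * Dop F (Dop F (z0f K hK P)) p := by
    rw [Dop_mul dt1a hGd, g1]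
  have t2 : Dop F (fun q : Pt K => (2 * q (iv K 1 h1) / Δf K hK q) * P q) p
      = ((2 * p (iv K 2 h2) * Δf K hK p
          - 2 * p (iv K 1 h1) * Dop F (Δf K hK) p) / (Δf K hK p) ^ 2) * P p
        + (2 * p (iv K 1 h1) / Δf K hK p) * Q p := by
    rw [Dop_mul dt2a (dP p), g3, hQp]
  have t3 : Dop F (fun q : Pt K => (q (iu1 K) / (q (iu0 K) * Δf K hK q)) * Q q) p
      = ((F p * (p (iu0 K) * Δf K hK p)
          - p (iu1 K) * (p (iu1 K) * Δf K hK p + p (iu0 K) * Dop F (Δf K hK) p))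
        / (p (iu0 K) * Δf K hK p) ^ 2) * Q p
        + (p (iu1 K) / (p (iu0 K) * Δf K hK p)) * Dop F Q p := by
    rw [Dop_mul dt3a (dQ p), g5]
  have hDzlo : Dop F (zlof K hK P) p
      = (((0 * p (iu0 K) - 1 * p (iu1 K)) / (p (iu0 K)) ^ 2) * Dop F (z0f K hK P) p
          + (1 / p (iu0 K)) * Dop F (Dop F (z0f K hK P)) p)
        - (((2 * p (iv K 2 h2) * Δf K hK p
            - 2 * p (iv K 1 h1) * Dop F (Δf K hK) p) / (Δf K hK p) ^ 2) * P p
          + (2 * p (iv K 1 h1) / Δf K hK p) * Q p)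
        + (((F p * (p (iu0 K) * Δf K hK p)
            - p (iu1 K) * (p (iu1 K) * Δf K hK p + p (iu0 K) * Dop F (Δf K hK) p))
          / (p (iu0 K) * Δf K hK p) ^ 2) * Q p
          + (p (iu1 K) / (p (iu0 K) * Δf K hK p)) * Dop F Q p) := by
    rw [hzlo, Dop_add (f := fun q => (1 / q (iu0 K)) * Dop F (z0f K hK P) q
      - (2 * q (iv K 1 h1) / Δf K hK q) * P q) (dT1.sub dT2) dT3, Dop_sub dT1 dT2, t1, t2, t3]
  -- put everything together
  rw [hDzlo, hGp]
  generalize Dop F (Dop F (z0f K hK P)) p = X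
  simp only [hz0]
  rw [hDNp, hDΔp]
  simp only [hNdef]
  have hΔval : Δf K hK p
      = 2 * (p (iu0 K)) ^ 2 * p (iv K 1 h1) - 2 * (p (iu1 K)) ^ 2 := rfl
  have hFp : F p = p (iu0 K) * p (iv K 1 h1) := rfl
  have hΔ' : 2 * (p (iu0 K)) ^ 2 * p (iv K 1 h1) - 2 * (p (iu1 K)) ^ 2 ≠ 0 :=
    hΔval ▸ hΔ
  rw [hFp]
  field_simp
  rw [hΔval]
  ring
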